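/- (The closure of the characteristic cone of inconsistent systems.) The following are equivalent: (i) σ is inconsistent, i.e. A = ∅; (ii) w*-cl K = w*-cl(cone Ω + barr C) × ℝ; (iii) w*-cl K = w*-cl cone(Ω ∪ barr C) × ℝ; (iv) w*-cl K = w*-cl cone(Ω + barr C) × ℝ. -/

import Mathlib

open Pointwise

noncomputable section

variable {X : Type*} [AddCommGroup X] [Module ℝ X] [TopologicalSpace X]

/-- Fenchel conjugate, as a function on the weak-* dual. -/
def conjFn (h : X → EReal) : WeakDual ℝ X → EReal :=
  fun p => ⨆ x : X, (p x : EReal) - h x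

/-- Epigraph of an extended-real-valued function. -/
def epiFn {V : Type*} (h : V → EReal) : Set (V × ℝ) :=
  {q | h q.1 ≤ (q.2 : EReal)}

/-- Graph of an extended-real-valued function (where it is finite). -/
def gphFn {V : Type*} (h : V → EReal) : Set (V × ℝ) :=
  {q | h q.1 = (q.2 : EReal)}

/-- Effective domain. -/
def domFn {V : Type*} (h : V → EReal) : Set V :=
  {x | h x < ⊤}

open Classical in
/-- Indicator function of a set. -/
def indicatorE {V : Type*} (D : Set V) : V → EReal :=
  fun x => if x ∈ D then (0 : EReal) else ⊤

/-- Convex cone generated by `D ∪ {0}`. -/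
def coneGen {V : Type*} [AddCommGroup V] [Module ℝ V] (D : Set V) : Set V :=
  {0} ∪ {y | ∃ t : ℝ, 0 ≤ t ∧ ∃ x ∈ convexHull ℝ D, y = t • x}

/-- `h ∈ Γ(X)`: proper, convex and lower semicontinuous. -/
def InGamma (h : X → EReal) : Prop :=
  (∀ x, h x ≠ ⊥) ∧ (∃ x, h x ≠ ⊤) ∧
    Convex ℝ {q : X × ℝ | h q.1 ≤ (q.2 : EReal)} ∧ LowerSemicontinuous h

/-- Solution set `A` of the system `σ = {f i x ≤ 0, i ∈ I; x ∈ C}`. -/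
def solSet {I : Type*} (C : Set X) (f : I → X → EReal) : Set X :=
  {x | x ∈ C ∧ ∀ i, f i x ≤ (0 : EReal)}

/-- Characteristic cone `K = cone (epi δ_C* ∪ ⋃ i, epi f_i*)` of the system. -/
def charCone {I : Type*} (C : Set X) (f : I → X → EReal) : Set (WeakDual ℝ X × ℝ) :=
  coneGen (epiFn (conjFn (indicatorE C)) ∪ ⋃ i, epiFn (conjFn (f i)))

/-- Barrier cone `barr C = dom δ_C*`. -/
def barCone (C : Set X) : Set (WeakDual ℝ X) :=
  domFn (conjFn (indicatorE C))

/-- The Farkas–Minkowski constraint qualification. -/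
def IsFM {I : Type*} (C : Set X) (f : I → X → EReal) : Prop :=
  (solSet C f).Nonempty ∧ IsClosed (charCone C f)

/-- Recession function `h^∞ = δ*_{dom h*}`. -/
def recFn (h : X → EReal) : X → EReal :=
  fun x => ⨆ q ∈ domFn (conjFn h), ((q x : ℝ) : EReal)

/-- Recession cone `D^∞ = ⋂_{t>0} t (D - a)`, for any `a ∈ D`. -/
def recCone (D : Set X) : Set X :=
  {d | ∀ a ∈ D, ∀ t : ℝ, 0 < t → d ∈ t • (D - ({a} : Set X))}

/-- Subdifferential of `h` at `a`. -/
def subdiff (h : X → EReal) (a : X) : Set (WeakDual ℝ X) :=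
  {p | (∃ r : ℝ, h a = (r : EReal)) ∧ ∀ x, h a + ((p (x - a) : ℝ) : EReal) ≤ h x}

/-! If `σ` has a solution `a`, then `K` lies in the closed half-space `{(p, r) | p a ≤ r}`, which
misses `(0, -1)`; each of (ii)–(iv) puts `(0, -1)` into `w*-cl K`, so forces `A = ∅`.
Conversely, if `A = ∅`, separating `(0, -1)` from `w*-cl K` in `X* × ℝ` (whose continuous
functionals are evaluations at points of `X`) produces a point `x` with `p x ≤ r` on `K`; the
Hahn–Banach theorem in `X × ℝ` (a Fenchel–Moreau argument) shows that `x` would solve `σ`.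
Since `K` also contains `(0, 1)`, once `(0, -1) ∈ w*-cl K` the closure contains the vertical line
through each of its points, whence `w*-cl K = w*-cl cone (Ω ∪ barr C) × ℝ`. The other two cones
have the same closure: `cone Ω + barr C = cone (Ω ∪ barr C)` as `barr C` is a convex cone, and
`b = lim_{t → 0⁺} t • (ω + t⁻¹ • b)` puts `barr C` into `w*-cl cone (Ω + barr C)` once `Ω ≠ ∅`. -/

open scoped NNReal Topology

section ConeGen

variable {V : Type*} [AddCommGroup V] [Module ℝ V] {D : Set V}

lemma zero_mem_coneGen (D : Set V) : (0 : V) ∈ coneGen D := Or.inl rfl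

lemma add_mem_coneGen {z w : V} (hz : z ∈ coneGen D) (hw : w ∈ coneGen D) :
    z + w ∈ coneGen D := by
  rcases hz with rfl | ⟨s, hs, x, hx, rfl⟩
  · simpa using hw
  rcases hw with rfl | ⟨t, ht, y, hy, rfl⟩
  · rw [add_zero]
    exact Or.inr ⟨s, hs, x, hx, rfl⟩
  rcases (add_nonneg hs ht).eq_or_lt with hst | hst
  · obtain ⟨rfl, rfl⟩ : s = 0 ∧ t = 0 := by constructor <;> linarith
    simpa using zero_mem_coneGen D
  refine Or.inr ⟨s + t, hst.le, (s / (s + t)) • x + (t / (s + t)) • y,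
    convex_iff_div.1 (convex_convexHull ℝ D) hx hy hs ht hst, ?_⟩
  rw [smul_add, smul_smul, smul_smul, mul_div_cancel₀ _ hst.ne', mul_div_cancel₀ _ hst.ne']

lemma coneGen_eq_hull (D : Set V) : coneGen D = PointedCone.hull ℝ D := by
  ext z
  constructor
  · rintro (rfl | ⟨t, ht, x, hx, rfl⟩)
    · exact zero_mem _
    · exact PointedCone.smul_mem _ ht
        (convexHull_min PointedCone.subset_hull (PointedCone.convex _) hx)
  · intro hz
    induction hz using Submodule.span_induction with
    | mem x hx => exact Or.inr ⟨1, zero_le_one, x, subset_convexHull ℝ D hx, (one_smul ℝ x).symm⟩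
    | zero => exact Or.inl rfl
    | add x y _ _ hx hy => exact add_mem_coneGen hx hy
    | smul a x _ hx =>
      rcases hx with rfl | ⟨t, ht, y, hy, rfl⟩
      · simpa using zero_mem_coneGen D
      · exact Or.inr ⟨a * t, mul_nonneg a.2 ht, y, hy, by rw [← smul_smul]; rfl⟩

lemma coneGen_subset {S : Set V} (h0 : (0 : V) ∈ S) (hadd : ∀ x ∈ S, ∀ y ∈ S, x + y ∈ S)
    (hsmul : ∀ t : ℝ, 0 ≤ t → ∀ x ∈ S, t • x ∈ S) (hD : D ⊆ S) : coneGen D ⊆ S := by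
  let P : PointedCone ℝ V :=
    { carrier := S
      add_mem' := fun hx hy => hadd _ hx _ hy
      zero_mem' := h0
      smul_mem' := fun c x hx => hsmul c c.2 x hx }
  rw [coneGen_eq_hull]
  exact Submodule.span_le (p := P) |>.2 hD

lemma coneGen_union_coe (Ω : Set V) (B : PointedCone ℝ V) :
    coneGen (Ω ∪ B) = coneGen Ω + B := by
  simp only [coneGen_eq_hull, PointedCone.hull, Submodule.span_union, Submodule.span_eq,
    Submodule.coe_sup]

lemma PointedCone.mk_mem_of_vertical {P : PointedCone ℝ (V × ℝ)} (hup : ((0 : V), (1 : ℝ)) ∈ P)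
    (hdown : ((0 : V), (-1 : ℝ)) ∈ P) {p : V} {r : ℝ} (hp : (p, r) ∈ P) (s : ℝ) : (p, s) ∈ P := by
  rcases le_total r s with h | h
  · simpa using P.add_mem hp (P.smul_mem (sub_nonneg.2 h) hup)
  · simpa using P.add_mem hp (P.smul_mem (sub_nonneg.2 h) hdown)

lemma PointedCone.le_zero_of_forall_lt {P : PointedCone ℝ V} {φ : V →ₗ[ℝ] ℝ} {u : ℝ}
    (h : ∀ z ∈ P, φ z < u) {z : V} (hz : z ∈ P) : φ z ≤ 0 := by
  by_contra! hpos
  have hu : 0 < u := by simpa using h 0 P.zero_mem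
  have := h _ (P.smul_mem (div_nonneg hu.le hpos.le) hz)
  rw [map_smul, smul_eq_mul, div_mul_cancel₀ _ hpos.ne'] at this
  exact lt_irrefl _ this

end ConeGen

lemma closure_coneGen_add_eq {V : Type*} [AddCommGroup V] [Module ℝ V] [TopologicalSpace V]
    [ContinuousAdd V] [ContinuousSMul ℝ V] {Ω : Set V} (hΩ : Ω.Nonempty) (B : PointedCone ℝ V) :
    closure (coneGen (Ω + (B : Set V))) = closure (coneGen (Ω ∪ B)) := by
  refine (closure_mono ?_).antisymm (closure_minimal ?_ isClosed_closure)
  · rw [coneGen_eq_hull, coneGen_eq_hull]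
    refine Submodule.span_le.2 ?_
    rintro _ ⟨ω, hω, b, hb, rfl⟩
    exact add_mem (PointedCone.subset_hull (Or.inl hω)) (PointedCone.subset_hull (Or.inr hb))
  rw [coneGen_eq_hull (Ω + (B : Set V)), ← Submodule.topologicalClosure_coe, coneGen_eq_hull]
  refine Submodule.span_le.2 ?_
  rintro z (hz | hz)
  · exact subset_closure (PointedCone.subset_hull (by simpa using Set.add_mem_add hz (zero_mem B)))
  obtain ⟨ω, hω⟩ := hΩ
  -- `z` is the limit of `t • ω + z = t • (ω + t⁻¹ • z)` as `t → 0⁺`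
  have hlim : Filter.Tendsto (fun t : ℝ => t • ω + z) (𝓝[>] 0) (𝓝 z) :=
    ((continuous_id.smul continuous_const).add continuous_const).tendsto' 0 z (by simp)
      |>.mono_left nhdsWithin_le_nhds
  refine mem_closure_of_tendsto hlim (eventually_nhdsWithin_of_forall fun t (ht : 0 < t) => ?_)
  have hmem : ω + t⁻¹ • z ∈ Ω + (B : Set V) :=
    Set.add_mem_add hω (B.smul_mem (inv_nonneg.2 ht.le) hz)
  have := PointedCone.smul_mem _ ht.le (PointedCone.subset_hull (R := ℝ) hmem)
  rwa [smul_add, smul_smul, mul_inv_cancel₀ ht.ne', one_smul] at this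

namespace WeakDual

@[simp] lemma add_apply (p q : WeakDual ℝ X) (x : X) : (p + q) x = p x + q x := rfl

@[simp] lemma smul_apply (t : ℝ) (p : WeakDual ℝ X) (x : X) : (t • p) x = t * p x := rfl

@[simp] lemma zero_apply (x : X) : (0 : WeakDual ℝ X) x = 0 := rfl

end WeakDual

lemma mem_domFn_iff {V : Type*} {g : V → EReal} {p : V} :
    p ∈ domFn g ↔ ∃ r : ℝ, (p, r) ∈ epiFn g :=
  ⟨fun h => let ⟨r, hr, _⟩ := EReal.exists_between_coe_real h; ⟨r, hr.le⟩,
    fun ⟨r, hr⟩ => lt_of_le_of_lt hr (EReal.coe_lt_top r)⟩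

lemma mem_epiFn_conjFn_iff {h : X → EReal} {q : WeakDual ℝ X} {r : ℝ} :
    (q, r) ∈ epiFn (conjFn h) ↔ ∀ z ∈ epiFn h, q z.1 ≤ r + z.2 := by
  change (⨆ x, (q x : EReal) - h x) ≤ r ↔ _
  rw [iSup_le_iff]
  constructor
  · rintro H ⟨y, s⟩ (hys : h y ≤ s)
    have : ((q y - s : ℝ) : EReal) ≤ r := (EReal.sub_le_sub le_rfl hys).trans (H y)
    have := EReal.coe_le_coe_iff.1 this
    linarith
  · intro H y
    generalize hy : h y = e
    induction e using EReal.rec with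
    | bot =>
      have := H (y, q y - r - 1) (by simp [epiFn, hy])
      linarith
    | coe a =>
      have := H (y, a) (by simp [epiFn, hy])
      rw [← EReal.coe_sub, EReal.coe_le_coe_iff]
      linarith
    | top => simp

lemma mem_epiFn_conjFn_indicatorE {C : Set X} {q : WeakDual ℝ X} {r : ℝ} :
    (q, r) ∈ epiFn (conjFn (indicatorE C)) ↔ ∀ x ∈ C, q x ≤ r := by
  have hepi : ∀ z : X × ℝ, z ∈ epiFn (indicatorE C) ↔ z.1 ∈ C ∧ 0 ≤ z.2 := by
    rintro ⟨x, s⟩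
    by_cases hx : x ∈ C <;> simp [epiFn, indicatorE, hx]
  simp only [mem_epiFn_conjFn_iff, hepi, and_imp, Prod.forall]
  exact ⟨fun H x hx => by simpa using H x 0 hx le_rfl,
    fun H x s hx hs => (H x hx).trans (le_add_of_nonneg_right hs)⟩

lemma mem_barCone_iff {C : Set X} {q : WeakDual ℝ X} :
    q ∈ barCone C ↔ ∃ M : ℝ, ∀ x ∈ C, q x ≤ M := by
  simp only [barCone, mem_domFn_iff, mem_epiFn_conjFn_indicatorE]

def barrierCone (C : Set X) : PointedCone ℝ (WeakDual ℝ X) where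
  carrier := barCone C
  zero_mem' := mem_barCone_iff.2 ⟨0, fun x _ => by simp⟩
  add_mem' {p q} hp hq := by
    obtain ⟨M, hM⟩ := mem_barCone_iff.1 hp
    obtain ⟨N, hN⟩ := mem_barCone_iff.1 hq
    exact mem_barCone_iff.2 ⟨M + N, fun x hx => by simpa using add_le_add (hM x hx) (hN x hx)⟩
  smul_mem' c p hp := by
    obtain ⟨M, hM⟩ := mem_barCone_iff.1 hp
    exact mem_barCone_iff.2 ⟨c * M, fun x hx => mul_le_mul_of_nonneg_left (hM x hx) c.2⟩

@[simp] lemma coe_barrierCone (C : Set X) : (barrierCone C : Set (WeakDual ℝ X)) = barCone C := rfl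

lemma StrongDual.apply_prod_real {E : Type*} [AddCommGroup E] [Module ℝ E] [TopologicalSpace E]
    (Φ : StrongDual ℝ (E × ℝ)) (y : E) (s : ℝ) : Φ (y, s) = Φ (y, 0) + Φ (0, 1) * s := by
  rw [mul_comm, ← smul_eq_mul, ← map_smul, ← map_add]
  simp

lemma LowerSemicontinuous.isClosed_epiFn {V : Type*} [TopologicalSpace V] {h : V → EReal}
    (hh : LowerSemicontinuous h) : IsClosed (epiFn h) :=
  hh.isClosed_epigraph.preimage
    (continuous_fst.prodMk (continuous_coe_real_ereal.comp continuous_snd))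

lemma mem_epiFn_conjFn_of_separation {h : X → EReal} {p : WeakDual ℝ X} {c u : ℝ} (hc : c < 0)
    (hsep : ∀ w ∈ epiFn h, p w.1 + c * w.2 < u) : ((-c)⁻¹ • p, u / -c) ∈ epiFn (conjFn h) :=
  mem_epiFn_conjFn_iff.2 fun w hw => by
    have hc' : 0 < -c := neg_pos.2 hc
    rw [WeakDual.smul_apply, inv_mul_le_iff₀ hc', mul_add, mul_div_cancel₀ _ hc'.ne']
    linarith [hsep w hw]

section Separation

variable [IsTopologicalAddGroup X] [ContinuousSMul ℝ X] [LocallyConvexSpace ℝ X] {h : X → EReal}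

lemma exists_separation_epiFn (hh : InGamma h) {z : X × ℝ} (hz : z ∉ epiFn h) :
    ∃ (p : WeakDual ℝ X) (c u : ℝ), c ≤ 0 ∧ (∀ w ∈ epiFn h, p w.1 + c * w.2 < u) ∧
      u < p z.1 + c * z.2 := by
  obtain ⟨-, ⟨y, hy⟩, hcv, hlsc⟩ := hh
  obtain ⟨Φ, u, hlt, hgt⟩ := geometric_hahn_banach_closed_point hcv hlsc.isClosed_epiFn hz
  set p : WeakDual ℝ X := StrongDual.toWeakDual (Φ.comp (ContinuousLinearMap.inl ℝ X ℝ))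
  have hΦ (w : X × ℝ) : Φ w = p w.1 + Φ (0, 1) * w.2 := StrongDual.apply_prod_real Φ w.1 w.2
  refine ⟨p, Φ (0, 1), u, ?_, fun w hw => hΦ w ▸ hlt w hw, hΦ z ▸ hgt⟩
  -- `epi h` contains an upward ray, on which the separating functional must stay below `u`
  by_contra! hc
  set s := max (h y).toReal ((u - p y) / Φ (0, 1))
  have hmem : (y, s) ∈ epiFn h :=
    (EReal.le_coe_toReal hy).trans (EReal.coe_le_coe_iff.2 (le_max_left _ _))
  have hray := hΦ _ ▸ hlt _ hmem
  have hs : (u - p y) / Φ (0, 1) * Φ (0, 1) ≤ s * Φ (0, 1) :=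
    mul_le_mul_of_nonneg_right (le_max_right _ _) hc.le
  rw [div_mul_cancel₀ _ hc.ne'] at hs
  simp only at hray
  linarith

lemma exists_mem_epiFn_conjFn (hh : InGamma h) :
    ∃ q : WeakDual ℝ X, ∃ r : ℝ, (q, r) ∈ epiFn (conjFn h) := by
  obtain ⟨y, hy⟩ := hh.2.1
  set r := (h y).toReal
  have hr : h y = r := (EReal.coe_toReal hy (hh.1 y)).symm
  have hmem : (y, r) ∈ epiFn h := hr.le
  have hnot : (y, r - 1) ∉ epiFn h := fun H => by
    change h y ≤ _ at H
    rw [hr, EReal.coe_le_coe_iff] at H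
    linarith
  obtain ⟨p, c, u, -, hsep, hgt⟩ := exists_separation_epiFn hh hnot
  have hc : c < 0 := by linarith [hsep _ hmem]
  exact ⟨_, _, mem_epiFn_conjFn_of_separation hc hsep⟩

lemma le_zero_of_forall_mem_epiFn_conjFn (hh : InGamma h) {x : X}
    (hx : ∀ z ∈ epiFn (conjFn h), z.1 x ≤ z.2) : h x ≤ 0 := by
  by_contra hpos
  have hz : (x, (0 : ℝ)) ∉ epiFn h := by simpa [epiFn] using hpos
  obtain ⟨p, c, u, hc, hsep, hgt⟩ := exists_separation_epiFn hh hz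
  simp only [mul_zero, add_zero] at hgt
  rcases hc.lt_or_eq with hc | rfl
  · have := hx _ (mem_epiFn_conjFn_of_separation hc hsep)
    rw [WeakDual.smul_apply, inv_mul_le_iff₀ (neg_pos.2 hc),
      mul_div_cancel₀ _ (neg_pos.2 hc).ne'] at this
    linarith
  -- the separating hyperplane is vertical: tilt a point of `epi h*` along it
  obtain ⟨q, r, hqr⟩ := exists_mem_epiFn_conjFn hh
  have htilt (t : ℝ) (ht : 0 ≤ t) : (q + t • p, r + t * u) ∈ epiFn (conjFn h) := by
    rw [mem_epiFn_conjFn_iff] at hqr ⊢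
    intro w hw
    have := mul_le_mul_of_nonneg_left (hsep w hw).le ht
    simp only [zero_mul, add_zero] at this
    simp only [WeakDual.add_apply, WeakDual.smul_apply]
    linarith [hqr w hw]
  have hqx := hx _ hqr
  set t := (r - q x + 1) / (p x - u)
  have ht : t * (p x - u) = r - q x + 1 := div_mul_cancel₀ _ (sub_pos.2 hgt).ne'
  have := hx _ (htilt t (div_nonneg (by linarith) (sub_pos.2 hgt).le))
  simp only [WeakDual.add_apply, WeakDual.smul_apply] at this
  linarith

lemma mem_of_forall_mem_epiFn_conjFn_indicatorE {C : Set X} (hCcl : IsClosed C)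
    (hCcv : Convex ℝ C) {x : X} (hx : ∀ z ∈ epiFn (conjFn (indicatorE C)), z.1 x ≤ z.2) :
    x ∈ C := by
  by_contra hxC
  obtain ⟨g, u, hlt, hgt⟩ := geometric_hahn_banach_closed_point hCcv hCcl hxC
  exact (hx (StrongDual.toWeakDual g, u)
    (mem_epiFn_conjFn_indicatorE.2 fun y hy => (hlt y hy).le)).not_gt hgt

end Separation

instance WeakDual.instLocallyConvexSpace : LocallyConvexSpace ℝ (WeakDual ℝ X) :=
  WeakBilin.locallyConvexSpace

lemma WeakDual.exists_apply_prod_eq (Φ : StrongDual ℝ (WeakDual ℝ X × ℝ)) :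
    ∃ a : X, ∀ p r, Φ (p, r) = p a + Φ (0, 1) * r := by
  obtain ⟨a, ha⟩ := LinearMap.dualEmbedding_surjective (topDualPairing ℝ X)
    (Φ.comp (ContinuousLinearMap.inl ℝ _ ℝ))
  exact ⟨a, fun p r => by
    rw [StrongDual.apply_prod_real]
    exact congrArg (· + _) (DFunLike.congr_fun ha p).symm⟩

lemma exists_forall_le_of_zero_neg_one_notMem {P : PointedCone ℝ (WeakDual ℝ X × ℝ)}
    (hP : IsClosed (P : Set (WeakDual ℝ X × ℝ))) (h : ((0 : WeakDual ℝ X), (-1 : ℝ)) ∉ P) :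
    ∃ x : X, ∀ z ∈ P, z.1 x ≤ z.2 := by
  obtain ⟨Φ, u, hlt, hgt⟩ := geometric_hahn_banach_closed_point P.convex hP h
  obtain ⟨a, ha⟩ := WeakDual.exists_apply_prod_eq Φ
  have hc : Φ (0, 1) < 0 := by
    have hu : 0 < u := by simpa using hlt 0 P.zero_mem
    rw [ha] at hgt
    simp only [WeakDual.zero_apply] at hgt
    linarith
  refine ⟨(-Φ (0, 1))⁻¹ • a, fun ⟨p, r⟩ hz => ?_⟩
  have := PointedCone.le_zero_of_forall_lt (φ := Φ.toLinearMap) hlt hz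
  rw [ContinuousLinearMap.coe_coe, ha] at this
  rw [map_smul, smul_eq_mul, inv_mul_le_iff₀ (neg_pos.2 hc)]
  linarith

section CharCone

variable {I : Type*} {C : Set X} {f : I → X → EReal}

lemma epiFn_conjFn_indicatorE_subset_charCone :
    epiFn (conjFn (indicatorE C)) ⊆ charCone C f := by
  rw [charCone, coneGen_eq_hull]
  exact fun z hz => PointedCone.subset_hull (Or.inl hz)

lemma epiFn_conjFn_subset_charCone (i : I) : epiFn (conjFn (f i)) ⊆ charCone C f := by
  rw [charCone, coneGen_eq_hull]
  exact fun z hz => PointedCone.subset_hull (Or.inr (Set.mem_iUnion.2 ⟨i, hz⟩))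

lemma closure_charCone_subset_of_mem_solSet {x : X} (hx : x ∈ solSet C f) :
    closure (charCone C f) ⊆ {z | z.1 x ≤ z.2} := by
  refine closure_minimal (coneGen_subset (by simp) (fun z hz w hw => ?_) (fun t ht z hz => ?_) ?_)
    (isClosed_le ((WeakDual.eval_continuous x).comp continuous_fst) continuous_snd)
  · simpa using add_le_add hz hw
  · simpa using mul_le_mul_of_nonneg_left hz ht
  rintro ⟨p, r⟩ (hz | hz)
  · exact mem_epiFn_conjFn_indicatorE.1 hz x hx.1
  · obtain ⟨i, hi⟩ := Set.mem_iUnion.1 hz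
    simpa using mem_epiFn_conjFn_iff.1 hi (x, 0) (by simpa [epiFn] using hx.2 i)

lemma mem_solSet_of_forall_mem_charCone [IsTopologicalAddGroup X] [ContinuousSMul ℝ X]
    [LocallyConvexSpace ℝ X] (hCcl : IsClosed C) (hCcv : Convex ℝ C) (hf : ∀ i, InGamma (f i))
    {x : X} (hx : ∀ z ∈ charCone C f, z.1 x ≤ z.2) : x ∈ solSet C f :=
  ⟨mem_of_forall_mem_epiFn_conjFn_indicatorE hCcl hCcv fun z hz =>
      hx z (epiFn_conjFn_indicatorE_subset_charCone hz),
    fun i => le_zero_of_forall_mem_epiFn_conjFn (hf i) fun z hz =>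
      hx z (epiFn_conjFn_subset_charCone i hz)⟩

variable (C f) in
def closedCharCone : PointedCone ℝ (WeakDual ℝ X × ℝ) :=
  (PointedCone.hull ℝ
    (epiFn (conjFn (indicatorE C)) ∪ ⋃ i, epiFn (conjFn (f i)))).topologicalClosure

lemma coe_closedCharCone :
    (closedCharCone C f : Set (WeakDual ℝ X × ℝ)) = closure (charCone C f) := by
  rw [closedCharCone, Submodule.topologicalClosure_coe, charCone, coneGen_eq_hull]

theorem solSet_eq_empty_iff [IsTopologicalAddGroup X] [ContinuousSMul ℝ X] [LocallyConvexSpace ℝ X]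
    (hCcl : IsClosed C) (hCcv : Convex ℝ C) (hf : ∀ i, InGamma (f i)) :
    solSet C f = ∅ ↔ ((0 : WeakDual ℝ X), (-1 : ℝ)) ∈ closure (charCone C f) := by
  constructor
  · intro hA
    by_contra h
    rw [← coe_closedCharCone] at h
    obtain ⟨x, hx⟩ := exists_forall_le_of_zero_neg_one_notMem
      (by rw [coe_closedCharCone]; exact isClosed_closure) h
    have hxA := mem_solSet_of_forall_mem_charCone hCcl hCcv hf fun z hz =>
      hx z (by rw [← SetLike.mem_coe, coe_closedCharCone]; exact subset_closure hz)
    rw [hA] at hxA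
    exact hxA
  · intro h
    by_contra hA
    obtain ⟨x, hx⟩ := Set.nonempty_iff_ne_empty.2 hA
    have := closure_charCone_subset_of_mem_solSet hx h
    norm_num at this

lemma closure_charCone_subset :
    closure (charCone C f) ⊆
      closure (coneGen ((⋃ i, domFn (conjFn (f i))) ∪ barCone C)) ×ˢ (Set.univ : Set ℝ) := by
  set S := coneGen ((⋃ i, domFn (conjFn (f i))) ∪ barCone C)
  have hK : charCone C f ⊆ ((PointedCone.hull ℝ ((⋃ i, domFn (conjFn (f i))) ∪ barCone C)).prod ⊤ :
      PointedCone ℝ (WeakDual ℝ X × ℝ)) := by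
    rw [charCone, coneGen_eq_hull]
    refine Submodule.span_le.2 ?_
    rintro ⟨p, r⟩ (hz | hz)
    · exact ⟨PointedCone.subset_hull (Or.inr (mem_domFn_iff.2 ⟨r, hz⟩)), trivial⟩
    · obtain ⟨i, hi⟩ := Set.mem_iUnion.1 hz
      exact ⟨PointedCone.subset_hull (Or.inl (Set.mem_iUnion.2 ⟨i, mem_domFn_iff.2 ⟨r, hi⟩⟩)),
        trivial⟩
  rw [Submodule.prod_coe, ← coneGen_eq_hull, Submodule.top_coe] at hK
  calc closure (charCone C f) ⊆ closure (S ×ˢ Set.univ) := closure_mono hK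
    _ = closure S ×ˢ Set.univ := by rw [closure_prod_eq, closure_univ]

lemma closure_coneGen_prod_univ_subset
    (hfar : ((0 : WeakDual ℝ X), (-1 : ℝ)) ∈ closure (charCone C f)) :
    closure (coneGen ((⋃ i, domFn (conjFn (f i))) ∪ barCone C)) ×ˢ (Set.univ : Set ℝ) ⊆
      closure (charCone C f) := by
  set S := coneGen ((⋃ i, domFn (conjFn (f i))) ∪ barCone C) with hSdef
  set P := closedCharCone C f
  have hK : charCone C f ⊆ P := by rw [coe_closedCharCone]; exact subset_closure
  have hup : ((0 : WeakDual ℝ X), (1 : ℝ)) ∈ P :=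
    hK (epiFn_conjFn_indicatorE_subset_charCone (mem_epiFn_conjFn_indicatorE.2 (by simp)))
  have hdown : ((0 : WeakDual ℝ X), (-1 : ℝ)) ∈ P := by rwa [← SetLike.mem_coe, coe_closedCharCone]
  have hS : S ⊆ P.comap (LinearMap.inl ℝ _ ℝ) := by
    rw [hSdef, coneGen_eq_hull]
    refine Submodule.span_le.2 ?_
    rintro p (hp | hp)
    · obtain ⟨i, hi⟩ := Set.mem_iUnion.1 hp
      obtain ⟨r, hr⟩ := mem_domFn_iff.1 hi
      exact P.mk_mem_of_vertical hup hdown (hK (epiFn_conjFn_subset_charCone i hr)) 0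
    · obtain ⟨r, hr⟩ := mem_domFn_iff.1 hp
      exact P.mk_mem_of_vertical hup hdown (hK (epiFn_conjFn_indicatorE_subset_charCone hr)) 0
  have hSP : S ×ˢ Set.univ ⊆ (P : Set (WeakDual ℝ X × ℝ)) := fun z hz =>
    P.mk_mem_of_vertical hup hdown (hS hz.1) z.2
  rw [coe_closedCharCone] at hSP
  calc closure S ×ˢ Set.univ = closure (S ×ˢ Set.univ) := by rw [closure_prod_eq, closure_univ]
    _ ⊆ closure (charCone C f) := closure_minimal hSP isClosed_closure

lemma nonempty_iUnion_domFn_conjFn [IsTopologicalAddGroup X] [ContinuousSMul ℝ X]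
    [LocallyConvexSpace ℝ X] (hCne : C.Nonempty) (hf : ∀ i, InGamma (f i))
    (hA : solSet C f = ∅) : (⋃ i, domFn (conjFn (f i))).Nonempty := by
  obtain ⟨i⟩ : Nonempty I := by
    by_contra hI
    obtain ⟨x, hx⟩ := hCne
    have : x ∈ solSet C f := ⟨hx, fun i => (hI ⟨i⟩).elim⟩
    rw [hA] at this
    exact this
  obtain ⟨q, r, hqr⟩ := exists_mem_epiFn_conjFn (hf i)
  exact ⟨q, Set.mem_iUnion.2 ⟨i, mem_domFn_iff.2 ⟨r, hqr⟩⟩⟩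

end CharCone

theorem stmt15_general [IsTopologicalAddGroup X] [ContinuousSMul ℝ X] [LocallyConvexSpace ℝ X] {I : Type*} (C : Set X) (hCne : C.Nonempty) (hCcl : IsClosed C) (hCcv : Convex ℝ C)
    (f : I → X → EReal) (hf : ∀ i, InGamma (f i)) :
    [ solSet C f = ∅,
      closure (charCone C f) =
        (closure (coneGen (⋃ i, domFn (conjFn (f i))) + barCone C)) ×ˢ (Set.univ : Set ℝ),
      closure (charCone C f) =
        (closure (coneGen ((⋃ i, domFn (conjFn (f i))) ∪ barCone C))) ×ˢ (Set.univ : Set ℝ),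
      closure (charCone C f) =
        (closure (coneGen ((⋃ i, domFn (conjFn (f i))) + barCone C))) ×ˢ (Set.univ : Set ℝ) ].TFAE := by
  have hfarkas := solSet_eq_empty_iff hCcl hCcv hf
  have hinconsistent {S : Set (WeakDual ℝ X)} (h0 : 0 ∈ S)
      (h : closure (charCone C f) = closure S ×ˢ Set.univ) : solSet C f = ∅ :=
    hfarkas.2 (h ▸ ⟨subset_closure h0, trivial⟩)
  have h13 : solSet C f = ∅ ↔ closure (charCone C f) =
      closure (coneGen ((⋃ i, domFn (conjFn (f i))) ∪ barCone C)) ×ˢ Set.univ :=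
    ⟨fun h => closure_charCone_subset.antisymm (closure_coneGen_prod_univ_subset (hfarkas.1 h)),
      hinconsistent (zero_mem_coneGen _)⟩
  tfae_have 1 ↔ 3 := h13
  tfae_have 2 ↔ 3 := by rw [← coe_barrierCone, coneGen_union_coe]
  tfae_have 1 → 4 := fun h => by
    rw [← coe_barrierCone, closure_coneGen_add_eq (nonempty_iUnion_domFn_conjFn hCne hf h),
      coe_barrierCone]
    exact h13.1 h
  tfae_have 4 → 1 := hinconsistent (zero_mem_coneGen _)
  tfae_finish

/-- Proposition 1 (The closure of the characteristic cone of inconsistent systems). -/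
theorem stmt15 [IsTopologicalAddGroup X] [ContinuousSMul ℝ X] [LocallyConvexSpace ℝ X] [T2Space X] {I : Type*} (C : Set X) (hCne : C.Nonempty) (hCcl : IsClosed C) (hCcv : Convex ℝ C)
    (f : I → X → EReal) (hf : ∀ i, InGamma (f i)) :
    [ solSet C f = ∅,
      closure (charCone C f) =
        (closure (coneGen (⋃ i, domFn (conjFn (f i))) + barCone C)) ×ˢ (Set.univ : Set ℝ),
      closure (charCone C f) =
        (closure (coneGen ((⋃ i, domFn (conjFn (f i))) ∪ barCone C))) ×ˢ (Set.univ : Set ℝ),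
      closure (charCone C f) =
        (closure (coneGen ((⋃ i, domFn (conjFn (f i))) + barCone C))) ×ˢ (Set.univ : Set ℝ) ].TFAE :=
  stmt15_general C hCne hCcl hCcv f hf
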